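/- Assume each r_i is a coherent risk measure on L^p(Ω; ℝ) that is dilatation monotone, i.e. r_i(E(ξ | 𝔊)) ≤ r_i(ξ) for every sub-σ-algebra 𝔊 ⊆ 𝔉 and every ξ ∈ L^p(Ω; ℝ). Let K ⊆ ℝ^d be a deterministic closed convex cone and X ∈ L^p(Ω; ℝ^d). Then there exists η ∈ L^p(Ω; ℝ^d) with η(ω) ∈ K a.s. and r_i(X_i + η_i) ≤ 0 for all i, if and only if there exists a Borel measurable function g : ℝ^d → ℝ^d with g(X) ∈ L^p(Ω; ℝ^d), g(X(ω)) ∈ K a.s., and r_i(X_i + g_i(X)) ≤ 0 for all i. In other words, the set-valued portfolio X + K is acceptable if and only if it possesses an acceptable selection that is a deterministic function of X. -/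

import Mathlib

open MeasureTheory Set Filter
open scoped Pointwise ENNReal RealInnerProductSpace

noncomputable section

/-- `ℝ^d` with the Euclidean norm. -/
abbrev Vec (d : ℕ) := EuclideanSpace ℝ (Fin d)

/-- Effros measurability of a set-valued map: `{ω : X(ω) ∩ G ≠ ∅}` is measurable
for every open `G`. -/
def EffrosMeasurable {Ω : Type*} [MeasurableSpace Ω] {d : ℕ} (X : Ω → Set (Vec d)) : Prop :=
  ∀ G : Set (Vec d), IsOpen G → MeasurableSet {ω | (X ω ∩ G).Nonempty}

/-- A set-valued portfolio: an Effros-measurable map with nonempty closed convex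
lower-set values. -/
structure IsPortfolio {Ω : Type*} [MeasurableSpace Ω] {d : ℕ} (X : Ω → Set (Vec d)) : Prop where
  effros : EffrosMeasurable X
  nonempty : ∀ ω, (X ω).Nonempty
  isClosed : ∀ ω, IsClosed (X ω)
  convex : ∀ ω, Convex ℝ (X ω)
  lower : ∀ ω, ∀ x ∈ X ω, ∀ y : Vec d, (∀ i, y i ≤ x i) → y ∈ X ω

/-- A coherent risk measure on `L^p(Ω; ℝ)` with values in `ℝ ∪ {+∞} ⊆ EReal`:
monotone (antitone in the gain), cash invariant, subadditive and positively homogeneous. -/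
structure IsCoherent {Ω : Type*} [MeasurableSpace Ω] (μ : Measure Ω) (p : ℝ≥0∞)
    (r : (Ω → ℝ) → EReal) : Prop where
  ne_bot : ∀ ξ : Ω → ℝ, MemLp ξ p μ → r ξ ≠ ⊥
  mono : ∀ ξ η : Ω → ℝ, MemLp ξ p μ → MemLp η p μ → (∀ᵐ ω ∂μ, ξ ω ≤ η ω) → r η ≤ r ξ
  cash : ∀ ξ : Ω → ℝ, MemLp ξ p μ → ∀ c : ℝ, r (fun ω => ξ ω + c) = r ξ - (c : EReal)
  subadd : ∀ ξ η : Ω → ℝ, MemLp ξ p μ → MemLp η p μ →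
    r (fun ω => ξ ω + η ω) ≤ r ξ + r η
  homog : ∀ ξ : Ω → ℝ, MemLp ξ p μ → ∀ c : ℝ, 0 < c →
    r (fun ω => c * ξ ω) = (c : EReal) * r ξ

/-- The selection risk measure `ρ_{s,0}(𝐗)`: the set of deterministic `x ∈ ℝ^d`
for which `𝐗 + x` has a selection with all individually acceptable components. -/
def rho0 {Ω : Type*} [MeasurableSpace Ω] (μ : Measure Ω) (p : ℝ≥0∞) {d : ℕ}
    (r : Fin d → (Ω → ℝ) → EReal) (X : Ω → Set (Vec d)) : Set (Vec d) :=
  {x | ∃ ξ : Ω → Vec d, MemLp ξ p μ ∧ (∀ᵐ ω ∂μ, ξ ω ∈ X ω) ∧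
        ∀ i, r i (fun ω => ξ ω i + x i) ≤ 0}


/-!
Given an acceptable selection `X + η`, replace `η` by `E[η | σ(X)]`. By the Doob–Dynkin lemma
this is `g(X)` for a Borel `g`; it is still in `L^p`, and still `K`-valued because `K` is closed
and convex. Since `X` is `σ(X)`-measurable, `X_i + g_i(X) = E[X_i + η_i | σ(X)]`, so dilatation
monotonicity keeps every component acceptable.
-/

namespace IsCoherent

variable {Ω : Type*} {m mΩ : MeasurableSpace Ω} {μ : Measure Ω} {p : ℝ≥0∞}
  {r : (Ω → ℝ) → EReal}

theorem congr_ae (hr : IsCoherent μ p r) {ξ η : Ω → ℝ} (hξ : MemLp ξ p μ) (hη : MemLp η p μ)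
    (h : ξ =ᵐ[μ] η) : r ξ = r η :=
  le_antisymm (hr.mono η ξ hη hξ h.symm.le) (hr.mono ξ η hξ hη h.le)

theorem add_condExp_le [IsFiniteMeasure μ] (hr : IsCoherent μ p r) (hp : 1 ≤ p) (hm : m ≤ mΩ)
    (hdil : ∀ ξ : Ω → ℝ, MemLp ξ p μ → r (μ[ξ|m]) ≤ r ξ) {ζ η : Ω → ℝ}
    (hζm : StronglyMeasurable[m] ζ) (hζ : MemLp ζ p μ) (hη : MemLp η p μ) :
    r (fun ω => ζ ω + μ[η|m] ω) ≤ r (fun ω => ζ ω + η ω) := by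
  have hζη : MemLp (fun ω => ζ ω + η ω) p μ := hζ.add hη
  have hcond : (fun ω => ζ ω + μ[η|m] ω) =ᵐ[μ] μ[fun ω => ζ ω + η ω|m] := by
    have h := (condExp_add (hζ.integrable hp) (hη.integrable hp) m).symm
    rwa [condExp_of_stronglyMeasurable hm hζm (hζ.integrable hp)] at h
  calc r (fun ω => ζ ω + μ[η|m] ω) = r (μ[fun ω => ζ ω + η ω|m]) :=
        hr.congr_ae (hζ.add (hη.condExp hp)) (hζη.condExp hp) hcond
    _ ≤ r (fun ω => ζ ω + η ω) := hdil _ hζη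

theorem apply_add_condExp_le [IsFiniteMeasure μ] (hr : IsCoherent μ p r) (hp : 1 ≤ p)
    (hm : m ≤ mΩ) (hdil : ∀ ξ : Ω → ℝ, MemLp ξ p μ → r (μ[ξ|m]) ≤ r ξ)
    {ι : Type*} [Fintype ι] {X η : Ω → EuclideanSpace ℝ ι} (hXm : StronglyMeasurable[m] X)
    (hX : MemLp X p μ) (hη : MemLp η p μ) (i : ι) :
    r (fun ω => X ω i + μ[η|m] ω i) ≤ r (fun ω => X ω i + η ω i) := by
  let π : EuclideanSpace ℝ ι →L[ℝ] ℝ := EuclideanSpace.proj i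
  have hcoord : (fun ω => X ω i + μ[η|m] ω i) =ᵐ[μ] fun ω => X ω i + μ[(η · i)|m] ω := by
    filter_upwards [π.comp_condExp_comm (hη.integrable hp) (m := m)] with ω hω
    exact congrArg (X ω i + ·) hω
  calc r (fun ω => X ω i + μ[η|m] ω i) = r (fun ω => X ω i + μ[(η · i)|m] ω) :=
        hr.congr_ae ((hX.eval_piLp i).add ((hη.condExp hp).eval_piLp i))
          ((hX.eval_piLp i).add ((hη.eval_piLp i).condExp hp)) hcoord
    _ ≤ r (fun ω => X ω i + η ω i) :=
        hr.add_condExp_le hp hm hdil (π.continuous.comp_stronglyMeasurable hXm) (hX.eval_piLp i)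
          (hη.eval_piLp i)

end IsCoherent

theorem statement12 {Ω : Type*} [mΩ : MeasurableSpace Ω] (μ : Measure Ω)
    [IsProbabilityMeasure μ] [μ.IsComplete] {d : ℕ} (p : ℝ≥0∞) (hp : 1 ≤ p)
    (r : Fin d → (Ω → ℝ) → EReal) (hr : ∀ i, IsCoherent μ p (r i))
    (hdil : ∀ i, ∀ m : MeasurableSpace Ω, m ≤ mΩ →
      ∀ ξ : Ω → ℝ, MemLp ξ p μ → r i (μ[ξ|m]) ≤ r i ξ)
    (K : Set (Vec d)) (hKcl : IsClosed K) (hKconv : Convex ℝ K)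
    (X : Ω → Vec d) (hX : MemLp X p μ) :
    (∃ η : Ω → Vec d, MemLp η p μ ∧ (∀ᵐ ω ∂μ, η ω ∈ K) ∧
      ∀ i, r i (fun ω => X ω i + η ω i) ≤ 0) ↔
    (∃ g : Vec d → Vec d, Measurable g ∧ MemLp (fun ω => g (X ω)) p μ ∧
      (∀ᵐ ω ∂μ, g (X ω) ∈ K) ∧ ∀ i, r i (fun ω => X ω i + g (X ω) i) ≤ 0) := by
  refine ⟨fun ⟨η, hη, hηK, hηr⟩ => ?_, fun ⟨g, _, hgX, hgK, hgr⟩ => ⟨g ∘ X, hgX, hgK, hgr⟩⟩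
  have hXm : Measurable X := aemeasurable_iff_measurable.mp hX.aestronglyMeasurable.aemeasurable
  have hm : MeasurableSpace.comap X inferInstance ≤ mΩ := hXm.comap_le
  obtain ⟨g, hg, hgη⟩ := (stronglyMeasurable_condExp (m := MeasurableSpace.comap X inferInstance)
    (f := η) (μ := μ)).exists_eq_measurable_comp
  rw [Function.comp_def] at hgη
  refine ⟨g, hg.measurable, hgη ▸ hη.condExp hp, ?_, fun i => ?_⟩
  · simpa only [hgη] using hKconv.condExp_mem hm (hη.integrable hp) hKcl hηK
  · simpa only [hgη] using ((hr i).apply_add_condExp_le hp hm (hdil i _ hm)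
      (comap_measurable X).stronglyMeasurable hX hη i).trans (hηr i)
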